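/- arXiv:1805.07040 — 2 statements merged into one kernel-verified Lean document; each statement's English description precedes it below -/
import Mathlib

section
/- The first-order Taylor approximation of f(z) = log₂(1 + γ/(τ + z)) at a point z₀ > -τ is a global under-estimator: for all z > -τ, f(z) ≥ f(z₀) + f'(z₀)·(z - z₀), where f'(z₀) = -(log₂ e)·γ / ((τ + z₀)·(τ + γ + z₀)). -/
/-- First-order Taylor approximation of f(z) = log₂(1 + γ/(τ+z)) at z₀ > -τ is a global
under-estimator on z > -τ, with f'(z₀) = -(log₂ e)·γ/((τ+z₀)(τ+γ+z₀)). -/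
theorem stmt_2 (γ τ z₀ z : ℝ) (hγ : 0 ≤ γ) (hτ : 0 < τ) (hz₀ : -τ < z₀) (hz : -τ < z) :
    Real.logb 2 (1 + γ / (τ + z)) ≥
      Real.logb 2 (1 + γ / (τ + z₀)) +
        (-(1 / Real.log 2) * γ / ((τ + z₀) * (τ + γ + z₀))) * (z - z₀) := by
  have hA : 0 < τ + z := by linarith
  have hB : 0 < τ + z₀ := by linarith
  have hA' : 0 < τ + z + γ := by linarith
  have hB' : 0 < τ + z₀ + γ := by linarith
  have hlog2 : 0 < Real.log 2 := Real.log_pos (by norm_num)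
  have e1 : 1 + γ / (τ + z) = (τ + z + γ) / (τ + z) := by field_simp
  have e2 : 1 + γ / (τ + z₀) = (τ + z₀ + γ) / (τ + z₀) := by field_simp
  have h1 : Real.log ((τ+z)*(τ+z₀+γ)/((τ+z+γ)*(τ+z₀)))
      ≤ (τ+z)*(τ+z₀+γ)/((τ+z+γ)*(τ+z₀)) - 1 :=
    Real.log_le_sub_one_of_pos (by positivity)
  rw [Real.log_div (by positivity) (by positivity),
      Real.log_mul hA.ne' hB'.ne', Real.log_mul hA'.ne' hB.ne'] at h1
  have h2 : (τ+z)*(τ+z₀+γ)/((τ+z+γ)*(τ+z₀)) - 1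
      ≤ -(γ*((τ+z₀)-(τ+z))/((τ+z₀)*(τ+z₀+γ))) := by
    rw [div_sub_one (by positivity), neg_div', div_le_div_iff₀ (by positivity) (by positivity)]
    nlinarith [mul_nonneg (mul_nonneg hγ hB.le) (sq_nonneg (z - z₀))]
  have hmain : Real.log (τ+z₀+γ) - Real.log (τ+z₀) + γ*((τ+z₀)-(τ+z))/((τ+z₀)*(τ+z₀+γ))
      ≤ Real.log (τ+z+γ) - Real.log (τ+z) := by linarith
  rw [e1, e2, Real.logb, Real.logb, Real.log_div hA'.ne' hA.ne', Real.log_div hB'.ne' hB.ne',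
      ge_iff_le]
  have heq : (Real.log (τ+z₀+γ) - Real.log (τ+z₀)) / Real.log 2
        + (-(1 / Real.log 2) * γ / ((τ + z₀) * (τ + γ + z₀))) * (z - z₀)
      = (Real.log (τ+z₀+γ) - Real.log (τ+z₀) + γ*((τ+z₀)-(τ+z))/((τ+z₀)*(τ+z₀+γ)))
        / Real.log 2 := by
    have h3 : (τ + γ + z₀) ≠ 0 := by nlinarith
    field_simp
    ring
  rw [heq]
  exact div_le_div_of_nonneg_right hmain hlog2.le
end

section
/- (Proposition 1, uplink bound) For any fixed point q_l ∈ ℝ², user location s ∈ ℝ², altitude H > 0, bandwidth fraction α > 0, and ε = Pᵘγ₀/α > 0, the rate lower bound holds for all q ∈ ℝ²: α·log₂(1 + ε/(H² + ‖q - s‖²)) ≥ α·log₂(1 + ε/(H² + ‖q_l - s‖²)) - φ·(‖q - s‖² - ‖q_l - s‖²), where φ = α·(log₂ e)·ε / ((H² + ‖q_l - s‖²)·(H² + ‖q_l - s‖² + ε)). Moreover, equality holds when q = q_l. -/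
/-! The map `t ↦ log (1 + ε / t)` is convex on `(0, ∞)`, and the bound is its tangent-line
inequality at `t = H² + ‖q_l - s‖²`, evaluated at `t = H² + ‖q - s‖²`. It follows from
`log u ≤ u - 1` applied to the ratio of the two arguments of the logarithm. -/

open Real

lemma log_one_add_div_sub_le {ε x y : ℝ} (hε : 0 ≤ ε) (hx : 0 < x) (hy : 0 < y) :
    log (1 + ε / y) - log (1 + ε / x) ≤ ε / (y * (y + ε)) * (x - y) := by
  have hx' : 0 < 1 + ε / x := by positivity
  have hy' : 0 < 1 + ε / y := by positivity
  have gap : ε / (y * (y + ε)) * (x - y) - ε * (x - y) / (y * (x + ε)) =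
      ε * (x - y) ^ 2 / (y * (x + ε) * (y + ε)) := by
    field_simp
    ring
  calc log (1 + ε / y) - log (1 + ε / x) = log ((1 + ε / y) / (1 + ε / x)) :=
        (log_div hy'.ne' hx'.ne').symm
    _ ≤ (1 + ε / y) / (1 + ε / x) - 1 := log_le_sub_one_of_pos (by positivity)
    _ = ε * (x - y) / (y * (x + ε)) := by
        field_simp
        ring
    _ ≤ ε / (y * (y + ε)) * (x - y) := by
        have gap_nonneg : 0 ≤ ε * (x - y) ^ 2 / (y * (x + ε) * (y + ε)) := by positivity
        linarith

lemma logb_one_add_div_sub_le {b ε x y : ℝ} (hb : 1 < b) (hε : 0 ≤ ε) (hx : 0 < x) (hy : 0 < y) :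
    logb b (1 + ε / y) - logb b (1 + ε / x) ≤ 1 / log b * ε / (y * (y + ε)) * (x - y) := by
  have hlogb : 0 < log b := log_pos hb
  calc logb b (1 + ε / y) - logb b (1 + ε / x)
      = (log (1 + ε / y) - log (1 + ε / x)) / log b := by
        simp only [logb, sub_div]
    _ ≤ ε / (y * (y + ε)) * (x - y) / log b :=
        div_le_div_of_nonneg_right (log_one_add_div_sub_le hε hx hy) hlogb.le
    _ = 1 / log b * ε / (y * (y + ε)) * (x - y) := by ring

/-- (Proposition 1, uplink bound) For any fixed q_l, user location s, altitude H > 0,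
bandwidth fraction α > 0 and ε > 0, for all q:
α·log₂(1 + ε/(H² + ‖q-s‖²)) ≥ α·log₂(1 + ε/(H² + ‖q_l-s‖²)) - φ·(‖q-s‖² - ‖q_l-s‖²),
with φ = α·(log₂ e)·ε/((H²+‖q_l-s‖²)(H²+‖q_l-s‖²+ε)); equality holds at q = q_l. -/
theorem stmt_11 (H α ε : ℝ) (hH : 0 < H) (hα : 0 < α) (hε : 0 < ε)
    (ql s : EuclideanSpace ℝ (Fin 2)) :
    (∀ q : EuclideanSpace ℝ (Fin 2),
      α * Real.logb 2 (1 + ε / (H ^ 2 + ‖q - s‖ ^ 2)) ≥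
        α * Real.logb 2 (1 + ε / (H ^ 2 + ‖ql - s‖ ^ 2)) -
          (α * (1 / Real.log 2) * ε /
              ((H ^ 2 + ‖ql - s‖ ^ 2) * (H ^ 2 + ‖ql - s‖ ^ 2 + ε))) *
            (‖q - s‖ ^ 2 - ‖ql - s‖ ^ 2)) ∧
    α * Real.logb 2 (1 + ε / (H ^ 2 + ‖ql - s‖ ^ 2)) =
      α * Real.logb 2 (1 + ε / (H ^ 2 + ‖ql - s‖ ^ 2)) -
        (α * (1 / Real.log 2) * ε /
            ((H ^ 2 + ‖ql - s‖ ^ 2) * (H ^ 2 + ‖ql - s‖ ^ 2 + ε))) *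
          (‖ql - s‖ ^ 2 - ‖ql - s‖ ^ 2) := by
  refine ⟨fun q => ?_, by ring⟩
  set x := H ^ 2 + ‖q - s‖ ^ 2
  set y := H ^ 2 + ‖ql - s‖ ^ 2
  have bound := logb_one_add_div_sub_le one_lt_two hε.le
    (by positivity : 0 < x) (by positivity : 0 < y)
  have scaled := mul_le_mul_of_nonneg_left bound hα.le
  have rearrange : α * (1 / log 2) * ε / (y * (y + ε)) * (‖q - s‖ ^ 2 - ‖ql - s‖ ^ 2) =
      α * (1 / log 2 * ε / (y * (y + ε)) * (x - y)) := by
    ring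
  rw [ge_iff_le, sub_le_iff_le_add, rearrange]
  linarith
end
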